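/- Let μ be a probability measure on ℝ of the form μ = p δ_{x₁} + q δ_{x₂} + ρ with |x₁ - (-1)| ≤ δ, |x₂ - 1| ≤ δ, ρ supported in [-δ, δ], r = ρ(ℝ), and suppose p, q ∈ [1/2 - 2δ, 1/2 + δ/2] and r ≤ 4δ for some δ ∈ (0, 1/8). Then the Lévy distance between μ and b = (1/2)δ_{-1} + (1/2)δ_1 is at most 2δ. -/

import Mathlib

/-!
Away from the window `[-1 - δ, 1 + δ]` containing all of `μ`, both distribution functions are
`0` or `1`. On `[-1, 1)` the Bernoulli distribution function equals `1/2`, while shifting by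
`2δ` puts the atom `x₁` to the left of the point and `x₂` to its right, so the distribution
function of `μ` there lies between `p ≥ 1/2 - 2δ` and `1 - q ≤ 1/2 + 2δ`.
-/

open MeasureTheory ProbabilityTheory Set
open scoped ENNReal

/-- The Lévy distance between two probability measures on ℝ, defined via their
cumulative distribution functions. -/
noncomputable def levyDist (μ ν : Measure ℝ) : ℝ :=
  sInf {ε : ℝ | 0 < ε ∧ ∀ x : ℝ,
    cdf μ (x - ε) - ε ≤ cdf ν x ∧ cdf ν x ≤ cdf μ (x + ε) + ε}

/-- The symmetric Bernoulli distribution `b = (1/2)δ₋₁ + (1/2)δ₁`. -/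
noncomputable def bern : Measure ℝ :=
  (2 : ℝ≥0∞)⁻¹ • Measure.dirac (-1) + (2 : ℝ≥0∞)⁻¹ • Measure.dirac 1

lemma levyDist_le {μ ν : Measure ℝ} {ε : ℝ} (hε : 0 < ε)
    (h : ∀ x, cdf μ (x - ε) - ε ≤ cdf ν x ∧ cdf ν x ≤ cdf μ (x + ε) + ε) :
    levyDist μ ν ≤ ε :=
  csInf_le ⟨0, fun _ hε => hε.1.le⟩ ⟨hε, h⟩

section CDF

variable {μ : Measure ℝ} [IsProbabilityMeasure μ] {a b c y : ℝ}

lemma cdf_eq_one_sub_measureReal_Ioi (y : ℝ) : cdf μ y = 1 - μ.real (Ioi y) := by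
  rw [cdf_eq_real, ← compl_Ioi, probReal_compl_eq_one_sub measurableSet_Ioi]

lemma cdf_eq_zero_of_compl_Icc_null (h : μ (Icc a b)ᶜ = 0) (hy : y < a) : cdf μ y = 0 := by
  have hsub : Iic y ⊆ (Icc a b)ᶜ := fun _ hz hz' => (lt_of_le_of_lt hz hy).not_ge hz'.1
  rw [cdf_eq_real, measureReal_def, measure_mono_null hsub h, ENNReal.toReal_zero]

lemma cdf_eq_one_of_compl_Icc_null (h : μ (Icc a b)ᶜ = 0) (hy : b ≤ y) : cdf μ y = 1 := by
  have hsub : Ioi y ⊆ (Icc a b)ᶜ := fun _ hz hz' => (lt_of_le_of_lt hy hz).not_ge hz'.2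
  rw [cdf_eq_one_sub_measureReal_Ioi, measureReal_def, measure_mono_null hsub h,
    ENNReal.toReal_zero, sub_zero]

lemma le_cdf_of_smul_dirac_le (h : ENNReal.ofReal c • Measure.dirac a ≤ μ) (hy : a ≤ y) :
    c ≤ cdf μ y := by
  have hc : ENNReal.ofReal c ≤ μ (Iic y) := by
    simpa [Measure.dirac_apply_of_mem (show a ∈ Iic y from hy)] using h (Iic y)
  rw [cdf_eq_real, measureReal_def]
  exact (ENNReal.ofReal_le_iff_le_toReal (measure_ne_top μ _)).1 hc

lemma cdf_le_one_sub_of_smul_dirac_le (h : ENNReal.ofReal c • Measure.dirac a ≤ μ)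
    (hy : y < a) : cdf μ y ≤ 1 - c := by
  have hc : ENNReal.ofReal c ≤ μ (Ioi y) := by
    simpa [Measure.dirac_apply_of_mem (show a ∈ Ioi y from hy)] using h (Ioi y)
  rw [cdf_eq_one_sub_measureReal_Ioi, measureReal_def]
  linarith [(ENNReal.ofReal_le_iff_le_toReal (measure_ne_top μ _)).1 hc]

end CDF

lemma two_atoms_add_apply_eq_zero {α : Type*} [MeasurableSpace α] [MeasurableSingletonClass α]
    {c₁ c₂ : ℝ≥0∞} {x₁ x₂ : α} {ρ : Measure α} {s : Set α}
    (h₁ : x₁ ∉ s) (h₂ : x₂ ∉ s) (hρ : ρ s = 0) :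
    (c₁ • Measure.dirac x₁ + c₂ • Measure.dirac x₂ + ρ) s = 0 := by
  simp [Measure.dirac_apply, h₁, h₂, hρ]

instance : IsProbabilityMeasure bern :=
  ⟨by simp [bern, ENNReal.inv_two_add_inv_two]⟩

lemma bern_Iic (x : ℝ) :
    bern (Iic x) = 2⁻¹ * (Iic x).indicator 1 (-1) + 2⁻¹ * (Iic x).indicator 1 1 := by
  simp [bern, Measure.dirac_apply' _ measurableSet_Iic]

lemma cdf_bern_of_lt {x : ℝ} (hx : x < -1) : cdf bern x = 0 := by
  simp [cdf_eq_real, measureReal_def, bern_Iic, show ¬(-1 : ℝ) ≤ x by linarith,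
    show ¬(1 : ℝ) ≤ x by linarith]

lemma cdf_bern_of_mem_Ico {x : ℝ} (hx : x ∈ Ico (-1) 1) : cdf bern x = 1 / 2 := by
  simp [cdf_eq_real, measureReal_def, bern_Iic, hx.1, not_le.2 hx.2]

lemma cdf_bern_of_le {x : ℝ} (hx : 1 ≤ x) : cdf bern x = 1 := by
  simp [cdf_eq_real, measureReal_def, bern_Iic, show (-1 : ℝ) ≤ x by linarith, hx,
    ENNReal.inv_two_add_inv_two]

theorem levy_dist_le_two_delta_general (μ ρ : Measure ℝ) [IsProbabilityMeasure μ]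
    (δ : ℝ) (p q x₁ x₂ : ℝ)
    (hδ : δ ∈ Ioo (0 : ℝ) (1 / 8))
    (hx1 : |x₁ - (-1)| ≤ δ) (hx2 : |x₂ - 1| ≤ δ)
    (hρ : ρ (Icc (-δ) δ)ᶜ = 0)
    (hdecomp : μ = ENNReal.ofReal p • Measure.dirac x₁
        + ENNReal.ofReal q • Measure.dirac x₂ + ρ)
    (hp : p ∈ Icc (1 / 2 - 2 * δ) (1 / 2 + δ / 2))
    (hq : q ∈ Icc (1 / 2 - 2 * δ) (1 / 2 + δ / 2)) :
    levyDist μ bern ≤ 2 * δ := by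
  obtain ⟨hδ0, -⟩ := hδ
  rw [abs_le] at hx1 hx2
  have hp_le : ENNReal.ofReal p • Measure.dirac x₁ ≤ μ :=
    hdecomp ▸ Measure.le_add_right (Measure.le_add_right le_rfl)
  have hq_le : ENNReal.ofReal q • Measure.dirac x₂ ≤ μ :=
    hdecomp ▸ Measure.le_add_right (Measure.le_add_left le_rfl)
  have hsupp : μ (Icc (-1 - δ) (1 + δ))ᶜ = 0 := by
    rw [hdecomp]
    exact two_atoms_add_apply_eq_zero (fun h => h ⟨by linarith, by linarith⟩)
      (fun h => h ⟨by linarith, by linarith⟩)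
      (measure_mono_null (compl_subset_compl.2 (Icc_subset_Icc (by linarith) (by linarith))) hρ)
  refine levyDist_le (by positivity) fun x => ?_
  rcases lt_or_ge x (-1) with hx | hx
  · rw [cdf_bern_of_lt hx,
      cdf_eq_zero_of_compl_Icc_null hsupp (show x - 2 * δ < -1 - δ by linarith)]
    constructor <;> linarith [cdf_nonneg μ (x + 2 * δ)]
  rcases lt_or_ge x 1 with hx' | hx'
  · rw [cdf_bern_of_mem_Ico ⟨hx, hx'⟩]
    constructor
    · linarith [cdf_le_one_sub_of_smul_dirac_le hq_le (show x - 2 * δ < x₂ by linarith), hq.1]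
    · linarith [le_cdf_of_smul_dirac_le hp_le (show x₁ ≤ x + 2 * δ by linarith), hp.1]
  · rw [cdf_bern_of_le hx',
      cdf_eq_one_of_compl_Icc_null hsupp (show 1 + δ ≤ x + 2 * δ by linarith)]
    constructor <;> linarith [cdf_le_one μ (x - 2 * δ)]

theorem levy_dist_le_two_delta (μ ρ : Measure ℝ) [IsProbabilityMeasure μ]
    (δ : ℝ) (p q r x₁ x₂ : ℝ)
    (hδ : δ ∈ Ioo (0 : ℝ) (1 / 8))
    (hx1 : |x₁ - (-1)| ≤ δ) (hx2 : |x₂ - 1| ≤ δ)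
    (hρ : ρ (Icc (-δ) δ)ᶜ = 0)
    (hdecomp : μ = ENNReal.ofReal p • Measure.dirac x₁
        + ENNReal.ofReal q • Measure.dirac x₂ + ρ)
    (hr : r = (ρ univ).toReal)
    (hp : p ∈ Icc (1 / 2 - 2 * δ) (1 / 2 + δ / 2))
    (hq : q ∈ Icc (1 / 2 - 2 * δ) (1 / 2 + δ / 2))
    (hr4 : r ≤ 4 * δ) :
    levyDist μ bern ≤ 2 * δ :=
  levy_dist_le_two_delta_general μ ρ δ p q x₁ x₂ hδ hx1 hx2 hρ hdecomp hp hq
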